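/- If a matching in the acceptability graph saturates the lexicographically optimal matchable set of institutions (with respect to a fixed permutation of institutions), then it is a maximum-cardinality matching. -/

import Mathlib

open scoped Classical

variable {N D : Type*} [Fintype N] [Fintype D] [DecidableEq N] [DecidableEq D]

/-- Neighborhood of a set of institutions: agents adjacent to some institution in `T`. -/
noncomputable def nbr (adj : D → N → Prop) (T : Finset D) : Finset N :=
  Finset.univ.filter fun a => ∃ d ∈ T, adj d a

/-- `T` is equal-acceptable: exactly as many neighbors as institutions. -/
def equalAcc (adj : D → N → Prop) (T : Finset D) : Prop :=
  (nbr adj T).card = T.card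

/-- A safe block: a nonempty equal-acceptable set with no nonempty proper
equal-acceptable subset. -/
def safeBlock (adj : D → N → Prop) (S : Finset D) : Prop :=
  S.Nonempty ∧ equalAcc adj S ∧ ∀ S' ⊂ S, S'.Nonempty → ¬ equalAcc adj S'

/-- `M` is a matching of the bipartite graph restricted to institutions `Dbar`. -/
def isMatching (adj : D → N → Prop) (Dbar : Finset D) (M : Finset (D × N)) : Prop :=
  (∀ p ∈ M, p.1 ∈ Dbar ∧ adj p.1 p.2) ∧
  (∀ p ∈ M, ∀ q ∈ M, p.1 = q.1 → p = q) ∧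
  (∀ p ∈ M, ∀ q ∈ M, p.2 = q.2 → p = q)

/-- Number of edges of rank `r` in matching `M`, where an edge's rank is the rank of
its institution under `rk`. -/
noncomputable def sigCount (rk : D → ℕ) (M : Finset (D × N)) (r : ℕ) : ℕ :=
  (M.filter fun p => rk p.1 = r).card

/-- The signature of `M'` is lexicographically strictly better than that of `M`. -/
def sigBetter (rk : D → ℕ) (M' M : Finset (D × N)) : Prop :=
  ∃ r, (∀ s < r, sigCount rk M' s = sigCount rk M s) ∧ sigCount rk M r < sigCount rk M' r

/-- `M` is a rank-maximal matching: no matching has a lexicographically better signature. -/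
def rankMaximal (adj : D → N → Prop) (rk : D → ℕ) (M : Finset (D × N)) : Prop :=
  isMatching adj Finset.univ M ∧
    ∀ M' : Finset (D × N), isMatching adj Finset.univ M' → ¬ sigBetter rk M' M

/-- A set of institutions is matchable: some matching saturates it. -/
def matchable (adj : D → N → Prop) (S : Finset D) : Prop :=
  ∃ M : Finset (D × N), isMatching adj Finset.univ M ∧ ∀ d ∈ S, ∃ a, (d, a) ∈ M

/-- `S` is lexicographically strictly better than `T` with respect to ranking `rk`. -/
def setLexBetter (rk : D → ℕ) (S T : Finset D) : Prop :=
  ∃ d, d ∈ S ∧ d ∉ T ∧ ∀ d', rk d' < rk d → (d' ∈ S ↔ d' ∈ T)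


/-- The greedy lexi-optimal matchable set: process institutions in the order of the
list `L`, adding an institution whenever the result remains matchable. -/
noncomputable def greedySet (adj : D → N → Prop) (L : List D) : Finset D :=
  L.foldl (fun W d => if matchable adj (insert d W) then insert d W else W) ∅

/-! The matchable sets are the independent sets of a transversal matroid and the greedy set is a
maximal one, so it is a largest matchable set; a matching saturating it is at least that large.
Directly: by Hall's theorem each institution outside a maximal matchable set `W` is blocked by an
equal-acceptable subset of `W`. Submodularity of `|nbr adj ·|` makes the equal-acceptable subsets
of `W` closed under union, so a greatest one `U` blocks all of `D \ W`, and Hall's condition for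
`S \ (W \ U)` bounds any matchable `S` by `|U| + |W \ U| = |W|`. -/

open Finset

section

variable {adj : D → N → Prop}

lemma nbr_mono {A B : Finset D} (h : A ⊆ B) : nbr adj A ⊆ nbr adj B := by
  intro a ha
  simp only [nbr, mem_filter, mem_univ, true_and] at ha ⊢
  obtain ⟨d, hd, hadj⟩ := ha
  exact ⟨d, h hd, hadj⟩

lemma nbr_union (A B : Finset D) : nbr adj (A ∪ B) = nbr adj A ∪ nbr adj B := by
  ext a
  simp only [nbr, mem_filter, mem_univ, true_and, mem_union, or_and_right, exists_or]

lemma nbr_empty : nbr adj (∅ : Finset D) = ∅ := by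
  simp [nbr]

lemma isMatching.card_image_fst {Dbar : Finset D} {M : Finset (D × N)}
    (hM : isMatching adj Dbar M) : #(M.image Prod.fst) = #M :=
  card_image_of_injOn fun p hp q hq => hM.2.1 p hp q hq

lemma isMatching.card_image_snd {Dbar : Finset D} {M : Finset (D × N)}
    (hM : isMatching adj Dbar M) : #(M.image Prod.snd) = #M :=
  card_image_of_injOn fun p hp q hq => hM.2.2 p hp q hq

lemma matchable_image_fst {M : Finset (D × N)} (hM : isMatching adj univ M) :
    matchable adj (M.image Prod.fst) :=
  ⟨M, hM, by simp⟩

lemma matchable.subset {S T : Finset D} (hS : matchable adj S) (hTS : T ⊆ S) :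
    matchable adj T :=
  let ⟨M, hM, hsat⟩ := hS
  ⟨M, hM, fun d hd => hsat d (hTS hd)⟩

lemma matchable_empty : matchable adj (∅ : Finset D) :=
  ⟨∅, by simp [isMatching], by simp⟩

lemma matchable.card_le_card_nbr {S T : Finset D} (hS : matchable adj S) (hTS : T ⊆ S) :
    #T ≤ #(nbr adj T) := by
  obtain ⟨M, hM, hsat⟩ := hS
  set MT := M.filter fun p => p.1 ∈ T
  have hMT : isMatching adj univ MT :=
    ⟨fun p hp => hM.1 p (mem_of_mem_filter p hp),
      fun p hp q hq => hM.2.1 p (mem_of_mem_filter p hp) q (mem_of_mem_filter q hq),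
      fun p hp q hq => hM.2.2 p (mem_of_mem_filter p hp) q (mem_of_mem_filter q hq)⟩
  have hT : T ⊆ MT.image Prod.fst := fun d hd => by
    obtain ⟨a, ha⟩ := hsat d (hTS hd)
    exact mem_image.mpr ⟨(d, a), mem_filter.mpr ⟨ha, hd⟩, rfl⟩
  have hnbr : MT.image Prod.snd ⊆ nbr adj T := fun a ha => by
    obtain ⟨p, hp, rfl⟩ := mem_image.mp ha
    have hp' := mem_filter.mp hp
    simpa [nbr] using ⟨p.1, hp'.2, (hM.1 p hp'.1).2⟩
  calc #T ≤ #(MT.image Prod.fst) := card_le_card hT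
    _ = #(MT.image Prod.snd) := by rw [hMT.card_image_fst, hMT.card_image_snd]
    _ ≤ #(nbr adj T) := card_le_card hnbr

lemma matchable_of_forall_card_le_card_nbr {S : Finset D}
    (h : ∀ T ⊆ S, #T ≤ #(nbr adj T)) : matchable adj S := by
  have hall : ∀ s : Finset S, #s ≤ #(s.biUnion fun x => univ.filter (adj x.1)) := by
    intro s
    have hs : s.biUnion (fun x => univ.filter (adj x.1)) = nbr adj (s.image Subtype.val) := by
      ext a
      simp [nbr]
    rw [hs, ← card_image_of_injective s Subtype.val_injective]
    exact h _ fun d hd => by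
      obtain ⟨x, _, rfl⟩ := mem_image.mp hd
      exact x.2
  obtain ⟨f, hf_inj, hf⟩ := (all_card_le_biUnion_card_iff_existsInjective' _).mp hall
  refine ⟨S.attach.image fun x => (x.1, f x), ⟨?_, ?_, ?_⟩, ?_⟩
  · simp only [mem_image, mem_attach, true_and, forall_exists_index]
    rintro _ x rfl
    exact ⟨mem_univ _, (mem_filter.mp (hf x)).2⟩
  · simp only [mem_image, mem_attach, true_and, forall_exists_index]
    rintro _ x rfl _ y rfl hxy
    rw [Subtype.ext hxy]
  · simp only [mem_image, mem_attach, true_and, forall_exists_index]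
    rintro _ x rfl _ y rfl hxy
    rw [hf_inj hxy]
  · exact fun d hd => ⟨f ⟨d, hd⟩, mem_image.mpr ⟨⟨d, hd⟩, mem_attach _ _, rfl⟩⟩

lemma equalAcc_empty : equalAcc adj (∅ : Finset D) := by
  simp [equalAcc, nbr_empty]

lemma equalAcc_union {W A B : Finset D} (hW : matchable adj W) (hAW : A ⊆ W) (hBW : B ⊆ W)
    (hA : equalAcc adj A) (hB : equalAcc adj B) : equalAcc adj (A ∪ B) := by
  have hinter : nbr adj (A ∩ B) ⊆ nbr adj A ∩ nbr adj B :=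
    subset_inter (nbr_mono inter_subset_left) (nbr_mono inter_subset_right)
  have hsubmod : #(nbr adj (A ∪ B)) + #(A ∩ B) ≤ #(A ∪ B) + #(A ∩ B) :=
    calc #(nbr adj (A ∪ B)) + #(A ∩ B)
        ≤ #(nbr adj A ∪ nbr adj B) + #(nbr adj A ∩ nbr adj B) := by
          rw [nbr_union]
          gcongr
          exact (hW.card_le_card_nbr (inter_subset_left.trans hAW)).trans (card_le_card hinter)
      _ = #A + #B := by rw [card_union_add_card_inter, hA, hB]
      _ = #(A ∪ B) + #(A ∩ B) := (card_union_add_card_inter A B).symm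
  exact le_antisymm (by omega) (hW.card_le_card_nbr (union_subset hAW hBW))

lemma exists_greatest_equalAcc_subset {W : Finset D} (hW : matchable adj W) :
    ∃ U ⊆ W, equalAcc adj U ∧ ∀ T ⊆ W, equalAcc adj T → T ⊆ U := by
  set tight := W.powerset.filter (equalAcc adj)
  refine ⟨tight.sup id, ?_, ?_, fun T hTW hT => le_sup (f := id) (by simp [tight, hTW, hT])⟩
  · exact Finset.sup_le fun T hT => mem_powerset.mp (mem_filter.mp hT).1
  · refine (sup_induction (p := fun U => U ⊆ W ∧ equalAcc adj U) ⟨empty_subset W, equalAcc_empty⟩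
      (fun A hA B hB => ⟨union_subset hA.1 hB.1, equalAcc_union hW hA.1 hB.1 hA.2 hB.2⟩)
      fun T hT => ?_).2
    simpa [tight] using hT

/-- The blocking set is the set violating Hall's condition for `insert d W`, with `d` removed. -/
lemma exists_equalAcc_blocking {W : Finset D} {d : D} (hW : matchable adj W)
    (hd : ¬ matchable adj (insert d W)) :
    ∃ T ⊆ W, equalAcc adj T ∧ nbr adj {d} ⊆ nbr adj T := by
  obtain ⟨T, hTW, hT⟩ : ∃ T ⊆ insert d W, #(nbr adj T) < #T := by
    by_contra! h
    exact hd (matchable_of_forall_card_le_card_nbr h)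
  have hdT : d ∈ T := by
    by_contra hdT
    exact (hW.card_le_card_nbr ((subset_insert_iff_of_notMem hdT).mp hTW)).not_gt hT
  have hT'W : T.erase d ⊆ W := (erase_subset_erase d hTW).trans (erase_insert_subset d W)
  have hsub : nbr adj (T.erase d) ⊆ nbr adj T := nbr_mono (erase_subset d T)
  have hcard : #(T.erase d) + 1 = #T := card_erase_add_one hdT
  have hle : #(T.erase d) ≤ #(nbr adj (T.erase d)) := hW.card_le_card_nbr hT'W
  have heq : nbr adj (T.erase d) = nbr adj T :=
    eq_of_subset_of_card_le hsub (by omega)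
  refine ⟨T.erase d, hT'W, le_antisymm (by rw [heq]; omega) hle, ?_⟩
  rw [heq]
  exact nbr_mono (singleton_subset_iff.mpr hdT)

theorem card_le_card_of_maximal_matchable {S W : Finset D} (hS : matchable adj S)
    (hW : matchable adj W) (hmax : ∀ d ∉ W, ¬ matchable adj (insert d W)) :
    #S ≤ #W := by
  obtain ⟨U, hUW, hU, hgreatest⟩ := exists_greatest_equalAcc_subset hW
  have hblock : nbr adj (S \ W) ⊆ nbr adj U := by
    intro a ha
    obtain ⟨d, hd, hadj⟩ : ∃ d ∈ S \ W, adj d a := by simpa [nbr] using ha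
    obtain ⟨T, hTW, hT, hdT⟩ := exists_equalAcc_blocking hW (hmax d (mem_sdiff.mp hd).2)
    exact nbr_mono (hgreatest T hTW hT) (hdT (by simpa [nbr] using hadj))
  have hrest : S \ (W \ U) ⊆ (S \ W) ∪ U := fun d hd => by
    simp only [mem_sdiff, mem_union] at hd ⊢
    tauto
  have hnbr : nbr adj (S \ (W \ U)) ⊆ nbr adj U := by
    refine (nbr_mono hrest).trans ?_
    rw [nbr_union]
    exact union_subset hblock subset_rfl
  calc #S = #(S \ (W \ U)) + #(S ∩ (W \ U)) := (card_sdiff_add_card_inter S _).symm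
    _ ≤ #U + #(W \ U) := add_le_add
        ((hS.card_le_card_nbr sdiff_subset).trans ((card_le_card hnbr).trans hU.le))
        (card_le_card inter_subset_right)
    _ = #W := by rw [add_comm, card_sdiff_add_card_eq_card hUW]

end

section Greedy

variable (adj : D → N → Prop)

noncomputable def greedyStep (W : Finset D) (d : D) : Finset D :=
  if matchable adj (insert d W) then insert d W else W

lemma subset_foldl_greedyStep (L : List D) (W : Finset D) : W ⊆ L.foldl (greedyStep adj) W := by
  induction L generalizing W with
  | nil => exact subset_rfl
  | cons e L ih =>
    refine subset_trans ?_ (ih _)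
    unfold greedyStep
    split_ifs
    exacts [subset_insert e W, subset_rfl]

lemma matchable_foldl_greedyStep (L : List D) {W : Finset D} (hW : matchable adj W) :
    matchable adj (L.foldl (greedyStep adj) W) := by
  induction L generalizing W with
  | nil => exact hW
  | cons e L ih =>
    apply ih
    unfold greedyStep
    split_ifs with h
    exacts [h, hW]

lemma not_matchable_insert_foldl_greedyStep {L : List D} {d : D} (hdL : d ∈ L) (W : Finset D)
    (hd : d ∉ L.foldl (greedyStep adj) W) :
    ¬ matchable adj (insert d (L.foldl (greedyStep adj) W)) := by
  induction L generalizing W with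
  | nil => simp at hdL
  | cons e L ih =>
    rw [List.foldl_cons] at hd ⊢
    rcases List.mem_cons.mp hdL with rfl | hdL
    · have hsub := subset_foldl_greedyStep adj L (greedyStep adj W d)
      by_cases h : matchable adj (insert d W)
      · have hstep : greedyStep adj W d = insert d W := if_pos h
        rw [hstep] at hsub hd
        exact absurd (hsub (mem_insert_self d W)) hd
      · have hstep : greedyStep adj W d = W := if_neg h
        rw [hstep] at hsub ⊢
        exact fun h' => h (h'.subset (insert_subset_insert d hsub))
    · exact ih hdL _ hd

lemma greedySet_matchable (L : List D) : matchable adj (greedySet adj L) :=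
  matchable_foldl_greedyStep adj L matchable_empty

lemma not_matchable_insert_greedySet {L : List D} {d : D} (hdL : d ∈ L)
    (hd : d ∉ greedySet adj L) : ¬ matchable adj (insert d (greedySet adj L)) :=
  not_matchable_insert_foldl_greedyStep adj hdL ∅ hd

end Greedy

theorem saturating_lexopt_is_maximum_general (adj : D → N → Prop) (L : List D)
    (hall : ∀ d : D, d ∈ L)
    (M : Finset (D × N))
    (hsat : ∀ d ∈ greedySet adj L, ∃ a, (d, a) ∈ M) :
    ∀ M' : Finset (D × N), isMatching adj Finset.univ M' → M'.card ≤ M.card := by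
  intro M' hM'
  have hW : greedySet adj L ⊆ M.image Prod.fst := fun d hd => by
    obtain ⟨a, ha⟩ := hsat d hd
    exact mem_image.mpr ⟨(d, a), ha, rfl⟩
  calc M'.card = #(M'.image Prod.fst) := hM'.card_image_fst.symm
    _ ≤ #(greedySet adj L) :=
        card_le_card_of_maximal_matchable (matchable_image_fst hM') (greedySet_matchable adj L)
          fun d hd => not_matchable_insert_greedySet adj (hall d) hd
    _ ≤ #(M.image Prod.fst) := card_le_card hW
    _ ≤ M.card := card_image_le

/-- Any matching saturating the greedily-built lexi-optimal matchable set of institutions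
is a maximum-cardinality matching. -/
theorem saturating_lexopt_is_maximum (adj : D → N → Prop) (L : List D)
    (hnd : L.Nodup) (hall : ∀ d : D, d ∈ L)
    (M : Finset (D × N)) (hM : isMatching adj Finset.univ M)
    (hsat : ∀ d ∈ greedySet adj L, ∃ a, (d, a) ∈ M) :
    ∀ M' : Finset (D × N), isMatching adj Finset.univ M' → M'.card ≤ M.card :=
  saturating_lexopt_is_maximum_general adj L hall M hsat
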